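/- arXiv:2102.06593 — 2 statements merged into one kernel-verified Lean document; each statement's English description precedes it below -/
import Mathlib

section
/- Fix K ≥ 2 and T ≥ 1. Suppose nonnegative reals R₀,…,R_K, probability measures P₀,…,P_K, and random variables N₁(T),…,N_K(T) with Σᵢ E₀[Nᵢ(T)] ≤ T satisfy: (a) R₀ ≥ (Δ/2)·Σᵢ E₀[Nᵢ(T)]; (b) Rᵢ ≥ (TΔ/2)(1 - Eᵢ[Nᵢ(T)]/T) for all i ∈ [K]; (c) KL(P₀, Pᵢ) = 2 E₀[Nᵢ(T)] Δ²; and (d) R₀ ≤ B with Δ > 0. Then the average (1/K)Σᵢ Rᵢ ≥ (TΔ/2)(1/2 - sqrt(2ΔB/K)). -/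
/-!
Pinsker's inequality in the form `E_Q Z - E_P Z ≤ (b - a) √(KL(P, Q) / 2)` for `a ≤ Z ≤ b` comes
from the Donsker–Varadhan bound `E_P g - log E_Q e^g ≤ KL(P, Q)` (Gibbs' inequality against the
tilted measure `Q.tilted g`) with `g = -l Z`, Hoeffding's lemma for `log E_Q e^{-l Z}`, and
optimization in `l`. For arm `i` and `Z = Nᵢ` it gives `Eᵢ Nᵢ ≤ E₀ Nᵢ + TΔ √(E₀ Nᵢ)` by (c).
Averaging over the arms, Cauchy–Schwarz and `Δ ∑ E₀ Nᵢ ≤ 2B` (from (a) and (d)) bound the mean of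
`Eᵢ Nᵢ / T` by `1/K + √(2ΔB/K) ≤ 1/2 + √(2ΔB/K)`, and (b) turns this into the claim.
-/

open MeasureTheory BigOperators

/-- The Kullback–Leibler divergence between `P` and `Q` (real-valued). -/
noncomputable def klDiv {Ω : Type*} [MeasurableSpace Ω] (P Q : Measure Ω) : ℝ :=
  ∫ x, Real.log ((P.rnDeriv Q) x).toReal ∂P

open Real ProbabilityTheory Finset

lemma le_mul_sqrt_of_forall_mul_sub_sq_le {d s k : ℝ} (hs : 0 ≤ s)
    (h : ∀ l, l * d - s ^ 2 * l ^ 2 / 8 ≤ k) : d ≤ s * √(k / 2) := by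
  rcases hs.eq_or_lt with rfl | hs
  · by_contra! hd
    simp only [zero_mul] at hd
    have := h ((k + 1) / d)
    rw [div_mul_cancel₀ _ hd.ne'] at this
    norm_num at this
  · rw [← sqrt_sq hs.le, ← sqrt_mul (sq_nonneg s)]
    refine le_sqrt_of_sq_le ?_
    have := h (4 * d / s ^ 2)
    have hs2 : 0 < s ^ 2 := by positivity
    field_simp at this
    nlinarith

section Pinsker

variable {Ω : Type*} [MeasurableSpace Ω]

lemma integral_sub_log_integral_exp_le_klDiv {P Q : Measure Ω}
    [IsProbabilityMeasure P] [IsProbabilityMeasure Q] (hPQ : P ≪ Q)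
    (hllr : Integrable (llr P Q) P) {g : Ω → ℝ} (hgP : Integrable g P)
    (hgQ : Integrable (fun x ↦ exp (g x)) Q) :
    ∫ x, g x ∂P - log (∫ x, exp (g x) ∂Q) ≤ klDiv P Q := by
  have := isProbabilityMeasure_tilted hgQ
  have hgibbs := InformationTheory.integral_llr_add_sub_measure_univ_nonneg
    (hPQ.trans (absolutelyContinuous_tilted hgQ)) (integrable_llr_tilted_right hPQ hgP hllr hgQ)
  rw [integral_llr_tilted_right hPQ hgP hgQ hllr] at hgibbs
  simp only [probReal_univ, add_sub_cancel_right] at hgibbs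
  change _ ≤ ∫ x, llr P Q x ∂P
  linarith

lemma log_integral_exp_mul_le_of_mem_Icc {μ : Measure Ω} [IsProbabilityMeasure μ] {Z : Ω → ℝ}
    {a b : ℝ} (hZ : AEMeasurable Z μ) (hab : ∀ᵐ x ∂μ, Z x ∈ Set.Icc a b) (t : ℝ) :
    log (∫ x, exp (t * Z x) ∂μ) ≤ t * ∫ x, Z x ∂μ + (b - a) ^ 2 * t ^ 2 / 8 := by
  have hhoeffding := (hasSubgaussianMGF_of_mem_Icc hZ hab).mgf_le t
  have hshift : mgf (fun x ↦ Z x - ∫ x, Z x ∂μ) μ t = mgf Z μ t * exp (t * -∫ x, Z x ∂μ) := by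
    simpa only [sub_eq_add_neg] using mgf_add_const (-∫ x, Z x ∂μ)
  have hpos : 0 < mgf Z μ t := mgf_pos (integrable_exp_mul_of_mem_Icc hZ hab)
  rw [← mgf, log_le_iff_le_exp hpos]
  rw [hshift, ← le_div_iff₀ (exp_pos _), ← exp_sub] at hhoeffding
  refine hhoeffding.trans_eq (congrArg exp ?_)
  simp only [NNReal.coe_pow, NNReal.coe_div, coe_nnnorm, norm_eq_abs, NNReal.coe_ofNat]
  rw [div_pow, sq_abs]
  ring

theorem integral_sub_integral_le_mul_sqrt_klDiv {P Q : Measure Ω}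
    [IsProbabilityMeasure P] [IsProbabilityMeasure Q] (hPQ : P ≪ Q)
    (hllr : Integrable (llr P Q) P) {Z : Ω → ℝ} {a b : ℝ} (hZ : AEMeasurable Z Q)
    (hab : ∀ᵐ x ∂Q, Z x ∈ Set.Icc a b) :
    ∫ x, Z x ∂Q - ∫ x, Z x ∂P ≤ (b - a) * √(klDiv P Q / 2) := by
  obtain ⟨x, hx⟩ := hab.exists
  refine le_mul_sqrt_of_forall_mul_sub_sq_le (sub_nonneg.2 (hx.1.trans hx.2)) fun l ↦ ?_
  have hZP : Integrable Z P := .of_mem_Icc a b (hZ.mono_ac hPQ) (hPQ.ae_le hab)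
  have hdv := integral_sub_log_integral_exp_le_klDiv hPQ hllr (hZP.const_mul (-l))
    (integrable_exp_mul_of_mem_Icc hZ hab)
  have hhoeffding := log_integral_exp_mul_le_of_mem_Icc hZ hab (-l)
  rw [integral_const_mul] at hdv
  linarith

end Pinsker

lemma sq_sum_sqrt_le_card_mul_sum {ι : Type*} (s : Finset ι) {m : ι → ℝ} (hm : ∀ i, 0 ≤ m i) :
    (∑ i ∈ s, √(m i)) ^ 2 ≤ #s * ∑ i ∈ s, m i := by
  simpa only [sq_sqrt (hm _)] using sq_sum_le_card_mul_sum_sq (s := s) (f := fun i ↦ √(m i))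

lemma average_ge_of_le_add_mul_sqrt {ι : Type*} [Fintype ι] (hcard : 2 ≤ Fintype.card ι)
    {T Δ B : ℝ} (hT : 0 < T) (hΔ : 0 ≤ Δ) {m e R : ι → ℝ} (hm : ∀ i, 0 ≤ m i)
    (hmT : ∑ i, m i ≤ T) (hmB : Δ / 2 * ∑ i, m i ≤ B)
    (he : ∀ i, e i ≤ m i + T * Δ * √(m i)) (hR : ∀ i, (T * Δ / 2) * (1 - e i / T) ≤ R i) :
    (T * Δ / 2) * (1 / 2 - √(2 * Δ * B / Fintype.card ι)) ≤
      (1 / (Fintype.card ι : ℝ)) * ∑ i, R i := by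
  set K : ℝ := (Fintype.card ι : ℝ) with hKdef
  have hK : (2 : ℝ) ≤ K := by rw [hKdef]; exact_mod_cast hcard
  have hK0 : 0 < K := by linarith
  have hsqrt : Δ * ∑ i, √(m i) ≤ K * √(2 * Δ * B / K) := by
    rw [← div_le_iff₀' hK0]
    refine le_sqrt_of_sq_le ?_
    have := sq_sum_sqrt_le_card_mul_sum univ hm
    rw [card_univ] at this
    calc ((Δ * ∑ i, √(m i)) / K) ^ 2 = Δ ^ 2 / K ^ 2 * (∑ i, √(m i)) ^ 2 := by ring
      _ ≤ Δ ^ 2 / K ^ 2 * (K * ∑ i, m i) := by gcongr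
      _ = Δ / K * (Δ * ∑ i, m i) := by field_simp
      _ ≤ Δ / K * (2 * B) := mul_le_mul_of_nonneg_left (by linarith) (by positivity)
      _ = 2 * Δ * B / K := by ring
  have hsum_e : (∑ i, e i) / T ≤ 1 + Δ * ∑ i, √(m i) := by
    rw [div_le_iff₀ hT]
    calc ∑ i, e i ≤ ∑ i, (m i + T * Δ * √(m i)) := sum_le_sum fun i _ ↦ he i
      _ ≤ (1 + Δ * ∑ i, √(m i)) * T := by rw [sum_add_distrib, ← mul_sum]; linarith
  have hsum_R : (T * Δ / 2) * (K - (∑ i, e i) / T) ≤ ∑ i, R i := by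
    calc (T * Δ / 2) * (K - (∑ i, e i) / T) = ∑ i, (T * Δ / 2) * (1 - e i / T) := by
          simp [← mul_sum, sum_sub_distrib, sum_div, K]
      _ ≤ ∑ i, R i := sum_le_sum fun i _ ↦ hR i
  rw [one_div_mul_eq_div, le_div_iff₀ hK0]
  calc (T * Δ / 2) * (1 / 2 - √(2 * Δ * B / K)) * K
      ≤ (T * Δ / 2) * (K - (∑ i, e i) / T) := by
        rw [mul_assoc]
        exact mul_le_mul_of_nonneg_left (by linarith) (by positivity)
    _ ≤ ∑ i, R i := hsum_R

/-- **Averaging lemma for the lower bound construction.** Given probability measures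
`P₀, P₁, …, P_K`, pull counts `Nᵢ(T) ∈ [0, T]` with `∑ᵢ E₀[Nᵢ(T)] ≤ T`, and regrets
satisfying (a) `R₀ ≥ (Δ/2) ∑ᵢ E₀[Nᵢ(T)]`, (b) `Rᵢ ≥ (TΔ/2)(1 - Eᵢ[Nᵢ(T)]/T)`,
(c) `KL(P₀, Pᵢ) = 2 E₀[Nᵢ(T)] Δ²`, and (d) `R₀ ≤ B`, with `K ≥ 2` and `Δ > 0`, we get
`(1/K) ∑ᵢ Rᵢ ≥ (TΔ/2)(1/2 - sqrt (2ΔB/K))`. -/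
theorem averaging_lower_bound {Ω : Type*} [MeasurableSpace Ω]
    (K : ℕ) (hK : 2 ≤ K) (T Δ B : ℝ) (hT : 1 ≤ T) (hΔ : 0 < Δ)
    (P0 : Measure Ω) (P : Fin K → Measure Ω)
    [IsProbabilityMeasure P0] [∀ i, IsProbabilityMeasure (P i)]
    (hac : ∀ i, P0 ≪ P i)
    (hint : ∀ i, Integrable (fun x => Real.log ((P0.rnDeriv (P i)) x).toReal) P0)
    (N : Fin K → Ω → ℝ) (hNmeas : ∀ i, Measurable (N i))
    (hNbd : ∀ i, ∀ x, N i x ∈ Set.Icc (0 : ℝ) T)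
    (R0 : ℝ) (R : Fin K → ℝ)
    (hsum : ∑ i, ∫ x, N i x ∂P0 ≤ T)
    (ha : R0 ≥ (Δ / 2) * ∑ i, ∫ x, N i x ∂P0)
    (hb : ∀ i, R i ≥ (T * Δ / 2) * (1 - (∫ x, N i x ∂(P i)) / T))
    (hc : ∀ i, klDiv P0 (P i) = 2 * (∫ x, N i x ∂P0) * Δ ^ 2)
    (hd : R0 ≤ B) :
    (1 / (K : ℝ)) * ∑ i, R i ≥ (T * Δ / 2) * (1 / 2 - Real.sqrt (2 * Δ * B / K)) := by
  have hm : ∀ i, 0 ≤ ∫ x, N i x ∂P0 := fun i ↦ integral_nonneg fun x ↦ (hNbd i x).1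
  have hpinsker : ∀ i, ∫ x, N i x ∂(P i) ≤ ∫ x, N i x ∂P0 + T * Δ * √(∫ x, N i x ∂P0) := by
    intro i
    have := integral_sub_integral_le_mul_sqrt_klDiv (hac i) (hint i) (hNmeas i).aemeasurable
      (.of_forall (hNbd i))
    rwa [hc i, sub_zero, show 2 * (∫ x, N i x ∂P0) * Δ ^ 2 / 2 = Δ ^ 2 * ∫ x, N i x ∂P0 by ring,
      sqrt_mul (sq_nonneg Δ), sqrt_sq hΔ.le, ← mul_assoc, sub_le_iff_le_add'] at this
  simpa using average_ge_of_le_add_mul_sqrt (by simpa using hK) (by linarith) hΔ.le hm hsum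
    (ha.trans hd) hpinsker hb
end

section
/- Let no rate function achieved by any algorithm be strictly smaller in pointwise order than θ_β for β ∈ [1/2,1): if θ' is nondecreasing, takes values in [1/2,1], satisfies θ'(α) ≥ min{max{θ'(0), 1+α-θ'(0)}, 1} for all α, and θ'(α) ≤ θ_β(α) for all α ∈ [0,1], then θ' = θ_β. -/
/-!
The lower bound ties `θ'` to the rate `θ_{θ'(0)}`, while `θ' ≤ θ_β` at `0` gives `θ'(0) ≤ β`.
If `θ'(0) = β` the two bounds squeeze `θ'` onto `θ_β`. If `θ'(0) < β`, evaluating at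
`α = 2β - 1`, where `θ_β` equals `β`, gives `θ'(2β - 1) ≥ 2β - θ'(0) > β`, a contradiction.
-/

/-- The rate `θ_β(α)` of the paper. -/
def paretoRate (β α : ℝ) : ℝ := min (max β (1 + α - β)) 1

theorem paretoRate_zero {β : ℝ} (hβlb : 1 / 2 ≤ β) (hβub : β ≤ 1) : paretoRate β 0 = β := by
  unfold paretoRate
  rw [max_eq_left (by linarith), min_eq_left hβub]

theorem paretoRate_two_mul_sub_one {β : ℝ} (hβub : β ≤ 1) : paretoRate β (2 * β - 1) = β := by
  unfold paretoRate
  rw [show 1 + (2 * β - 1) - β = β by ring, max_self, min_eq_left hβub]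

theorem lt_paretoRate_two_mul_sub_one {β β' : ℝ} (hβ' : β' < β) (hβub : β < 1) :
    β < paretoRate β' (2 * β - 1) :=
  lt_min (lt_max_of_lt_right (by linarith)) hβub

theorem linucbpp_pareto_optimal_general (β : ℝ) (hβlb : 1/2 ≤ β) (hβub : β < 1)
    (θ' : ℝ → ℝ)
    (hlb : ∀ a ∈ Set.Icc (0 : ℝ) 1, min (max (θ' 0) (1 + a - θ' 0)) 1 ≤ θ' a)
    (hle : ∀ a ∈ Set.Icc (0 : ℝ) 1, θ' a ≤ min (max β (1 + a - β)) 1) :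
    ∀ a ∈ Set.Icc (0 : ℝ) 1, θ' a = min (max β (1 + a - β)) 1 := by
  have hθ'_zero_le : θ' 0 ≤ β :=
    (hle 0 ⟨le_rfl, zero_le_one⟩).trans_eq (paretoRate_zero hβlb hβub.le)
  have hθ'_zero : θ' 0 = β := by
    refine hθ'_zero_le.antisymm (not_lt.1 fun hlt => ?_)
    have hmem : 2 * β - 1 ∈ Set.Icc (0 : ℝ) 1 := ⟨by linarith, by linarith⟩
    have hupper : θ' (2 * β - 1) ≤ β :=
      (hle _ hmem).trans_eq (paretoRate_two_mul_sub_one hβub.le)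
    exact (lt_paretoRate_two_mul_sub_one hlt hβub).not_ge ((hlb _ hmem).trans hupper)
  intro a ha
  exact (hle a ha).antisymm (hθ'_zero ▸ hlb a ha)

/-- **Pareto optimality of LinUCB++ (Theorem 4).** Let `θ_β(α) = min (max β (1+α-β)) 1`
for `β ∈ [1/2,1)`. If `θ'` is nondecreasing on `[0,1]`, takes values in `[1/2,1]`,
satisfies the rate lower bound `θ'(α) ≥ min (max (θ' 0) (1 + α - θ' 0)) 1` for all
`α ∈ [0,1]`, and `θ' ≤ θ_β` pointwise on `[0,1]`, then `θ' = θ_β` on `[0,1]`. -/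
theorem linucbpp_pareto_optimal (β : ℝ) (hβlb : 1/2 ≤ β) (hβub : β < 1)
    (θ' : ℝ → ℝ)
    (hmono : ∀ a b, 0 ≤ a → a ≤ b → b ≤ 1 → θ' a ≤ θ' b)
    (hrange : ∀ a ∈ Set.Icc (0 : ℝ) 1, θ' a ∈ Set.Icc (1/2 : ℝ) 1)
    (hlb : ∀ a ∈ Set.Icc (0 : ℝ) 1, min (max (θ' 0) (1 + a - θ' 0)) 1 ≤ θ' a)
    (hle : ∀ a ∈ Set.Icc (0 : ℝ) 1, θ' a ≤ min (max β (1 + a - β)) 1) :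
    ∀ a ∈ Set.Icc (0 : ℝ) 1, θ' a = min (max β (1 + a - β)) 1 :=
  linucbpp_pareto_optimal_general β hβlb hβub θ' hlb hle
end
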